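/- Let m ≥ 2 and let γ be a real number with ‖mγ‖ ≠ 0. Then there exist constants C > 0 and η > 0 such that for every real number β and every integer k ≥ 2, |(1/q_k) ∑_{0≤u<q_k} e(γ S_α(u) + β u)| ≤ C · e^{−kη}. -/

import Mathlib

/-!
Write `G_k = ∑_{u < q_k} e(γ S_α(u) + β u)` and `θ_k = γ + β q_k`, and let `a_k` be the maximal
digit at position `k`, so that `q_{k+1} = a_k q_k + q_{k-1}`. Uniqueness of Ostrowski
representations shows that the integers `c q_k + u` with `u < q_k`, `c ≤ a_k` (and `u < q_{k-1}`
when `c = a_k`) enumerate `[0, q_{k+1})` and have digit sum `c + S_α(u)`, whence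
`G_{k+1} = (∑_{c < a_k} e(c θ_k)) G_k + e(a_k θ_k) G_{k-1}`.
Consequently `max(|G_k|/q_k, |G_{k+1}|/q_{k+1})` is non-increasing in `k`, and it drops by a fixed
factor whenever `a_k = m` and `‖θ_k‖ ≥ δ`, because then `|∑_{c < m} e(c θ_k)| ≤ m - 4δ²`.
For odd `k` the identity `q_{k+4} + q_k = (m + 2) q_{k+2}` gives
`mγ = (m + 2) θ_{k+2} - θ_k - θ_{k+4}`, so one of these three has `‖θ‖ ≥ ‖mγ‖ / (m + 4)`:
the ratio contracts at least once every six steps.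
-/

noncomputable section

/-- `e x = exp(2 π i x)`. -/
def e (x : ℝ) : ℂ := Complex.exp (2 * Real.pi * Complex.I * x)

/-- `‖x‖`: the distance from `x` to the nearest integer. -/
def intDist (x : ℝ) : ℝ := |x - round x|

/-- Denominators of the convergents of `α = [0; 1, m, 1, m, …]`:
`q_0 = q_1 = 1`, `q_n = m·q_{n-1} + q_{n-2}` for even `n ≥ 2`, and
`q_n = q_{n-1} + q_{n-2}` for odd `n ≥ 3`. -/
def qseq (m : ℕ) : ℕ → ℕ
  | 0 => 1
  | 1 => 1
  | n + 2 => (if n % 2 = 0 then m else 1) * qseq m (n + 1) + qseq m n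

/-- `b` assigns to each natural number `n` its (unique) Ostrowski `α`-digit
sequence for `α = [0; 1, m, 1, m, …]`: `n = ∑ i, b n i · q_i`, `b n 0 = 0`,
even-indexed digits are `≤ 1`, odd-indexed digits are `≤ m`, and if a digit
(of positive index) attains its maximal allowed value then the previous digit
vanishes. -/
def IsOstrowskiDigits (m : ℕ) (b : ℕ → ℕ →₀ ℕ) : Prop :=
  (∀ n : ℕ, ((b n).sum fun i c => c * qseq m i) = n) ∧
  (∀ n : ℕ, b n 0 = 0) ∧
  (∀ n i : ℕ, i % 2 = 0 → b n i ≤ 1) ∧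
  (∀ n i : ℕ, i % 2 = 1 → b n i ≤ m) ∧
  (∀ n i : ℕ, 1 ≤ i → b n i = (if i % 2 = 0 then 1 else m) → b n (i - 1) = 0)

/-- Ostrowski sum of digits `S_α(n)`. -/
def Sα (b : ℕ → ℕ →₀ ℕ) (n : ℕ) : ℕ := (b n).sum fun _ c => c

lemma Finset.sum_range_mul_add {M : Type*} [AddCommMonoid M] (f : ℕ → M) (a q r : ℕ) :
    ∑ u ∈ Finset.range (a * q + r), f u =
      ∑ c ∈ Finset.range a, ∑ u ∈ Finset.range q, f (c * q + u) +
        ∑ u ∈ Finset.range r, f (a * q + u) := by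
  rw [Finset.sum_range_add]
  congr 1
  induction a with
  | zero => simp
  | succ a ih => rw [Nat.succ_mul, Finset.sum_range_add, ih, Finset.sum_range_succ]

lemma e_add (x y : ℝ) : e (x + y) = e x * e y := by
  rw [e, e, e, ← Complex.exp_add]; push_cast; ring_nf

lemma e_intCast (n : ℤ) : e n = 1 := by
  rw [e, ← Complex.exp_int_mul_two_pi_mul_I n]; push_cast; ring_nf

lemma norm_e (x : ℝ) : ‖e x‖ = 1 := by
  rw [e, show 2 * Real.pi * Complex.I * x = ((2 * Real.pi * x : ℝ) : ℂ) * Complex.I by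
    push_cast; ring]
  exact Complex.norm_exp_ofReal_mul_I _

lemma norm_sum_e_le_card {ι : Type*} (s : Finset ι) (f : ι → ℝ) :
    ‖∑ i ∈ s, e (f i)‖ ≤ s.card :=
  (norm_sum_le _ _).trans (by simp [norm_e])

lemma intDist_eq_norm (x : ℝ) : intDist x = ‖(x : UnitAddCircle)‖ := UnitAddCircle.norm_eq.symm

lemma intDist_le_half (x : ℝ) : intDist x ≤ 1 / 2 := abs_sub_round x

lemma intDist_nsmul_sub_sub_le (n : ℕ) (x y z : ℝ) :
    intDist (n * x - y - z) ≤ n * intDist x + intDist y + intDist z := by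
  have hcoe : ((n * x - y - z : ℝ) : UnitAddCircle) = n • (x : UnitAddCircle) - y - z := by
    rw [AddCircle.coe_sub, AddCircle.coe_sub, ← AddCircle.coe_nsmul, nsmul_eq_mul]
  simp only [intDist_eq_norm, hcoe]
  calc ‖n • (x : UnitAddCircle) - y - z‖ ≤ ‖n • (x : UnitAddCircle) - y‖ + ‖(z : UnitAddCircle)‖ :=
        norm_sub_le _ _
    _ ≤ ‖n • (x : UnitAddCircle)‖ + ‖(y : UnitAddCircle)‖ + ‖(z : UnitAddCircle)‖ := by
        gcongr; exact norm_sub_le _ _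
    _ ≤ _ := by gcongr; exact norm_nsmul_le

lemma four_mul_intDist_le_norm_one_sub_e (θ : ℝ) : 4 * intDist θ ≤ ‖1 - e θ‖ := by
  set s := θ - round θ
  have hs : |Real.pi * s| ≤ Real.pi / 2 := by
    rw [abs_mul, abs_of_pos Real.pi_pos]
    nlinarith [abs_sub_round θ, Real.pi_pos]
  have he : e θ = Complex.exp (Complex.I * ↑(2 * Real.pi * s)) := by
    rw [show θ = s + round θ by ring, e_add, e_intCast, mul_one, e]; push_cast; ring_nf
  rw [norm_sub_rev, he, Complex.norm_exp_I_mul_ofReal_sub_one,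
    show 2 * Real.pi * s / 2 = Real.pi * s by ring]
  calc 4 * intDist θ = 2 * (2 / Real.pi * |Real.pi * s|) := by
        rw [abs_mul, abs_of_pos Real.pi_pos, intDist]; field_simp; ring
    _ ≤ 2 * |Real.sin (Real.pi * s)| := by gcongr; exact Real.mul_abs_le_abs_sin hs
    _ = ‖2 * Real.sin (Real.pi * s)‖ := by rw [Real.norm_eq_abs, abs_mul, abs_two]

lemma norm_one_add_e_le (θ : ℝ) : ‖1 + e θ‖ ≤ 2 - 4 * intDist θ ^ 2 := by
  have hpar := parallelogram_law_with_norm ℝ (1 : ℂ) (e θ)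
  rw [norm_one, norm_e] at hpar
  have h1 := four_mul_intDist_le_norm_one_sub_e θ
  have h2 := intDist_le_half θ
  have h3 : 0 ≤ intDist θ := abs_nonneg _
  rw [← pow_le_pow_iff_left₀ (norm_nonneg _) (by nlinarith) two_ne_zero]
  nlinarith [mul_self_le_mul_self (by positivity) h1]

lemma norm_sum_range_e_mul_le {M : ℕ} (hM : 2 ≤ M) (θ : ℝ) :
    ‖∑ c ∈ Finset.range M, e (c * θ)‖ ≤ M - 4 * intDist θ ^ 2 := by
  induction M, hM using Nat.le_induction with
  | base => simpa [Finset.sum_range_succ, e] using norm_one_add_e_le θ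
  | succ M _ ih =>
    rw [Finset.sum_range_succ]
    refine (norm_add_le _ _).trans ?_
    rw [norm_e]; push_cast; linarith

def maxRatio (Q g : ℕ → ℝ) (j : ℕ) : ℝ := max (g j / Q j) (g (j + 1) / Q (j + 1))

section maxRatio

variable {Q g : ℕ → ℝ} {a : ℕ → ℕ}

lemma le_mul_maxRatio (hQ : ∀ j, 0 < Q j) (j : ℕ) : g j ≤ Q j * maxRatio Q g j := by
  rw [mul_comm, ← div_le_iff₀ (hQ j)]
  exact le_max_left _ _

lemma le_mul_maxRatio_succ (hQ : ∀ j, 0 < Q j) (j : ℕ) :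
    g (j + 1) ≤ Q (j + 1) * maxRatio Q g j := by
  rw [mul_comm, ← div_le_iff₀ (hQ _)]
  exact le_max_right _ _

lemma maxRatio_nonneg (hQ : ∀ j, 0 < Q j) (hg : ∀ j, 0 ≤ g j) (j : ℕ) : 0 ≤ maxRatio Q g j :=
  (div_nonneg (hg j) (hQ j).le).trans (le_max_left _ _)

lemma maxRatio_succ_le (hQ : ∀ j, 0 < Q j) (hQrec : ∀ j, Q (j + 2) = a (j + 1) * Q (j + 1) + Q j)
    (hgrec : ∀ j, g (j + 2) ≤ a (j + 1) * g (j + 1) + g j) (j : ℕ) :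
    maxRatio Q g (j + 1) ≤ maxRatio Q g j := by
  refine max_le (le_max_right _ _) ?_
  rw [div_le_iff₀ (hQ _), hQrec]
  have := le_mul_maxRatio hQ (g := g) j
  have := le_mul_maxRatio_succ hQ (g := g) j
  nlinarith [hgrec j, (a (j + 1)).cast_nonneg (α := ℝ)]

lemma antitone_maxRatio (hQ : ∀ j, 0 < Q j)
    (hQrec : ∀ j, Q (j + 2) = a (j + 1) * Q (j + 1) + Q j)
    (hgrec : ∀ j, g (j + 2) ≤ a (j + 1) * g (j + 1) + g j) : Antitone (maxRatio Q g) :=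
  antitone_nat_of_succ_le (maxRatio_succ_le hQ hQrec hgrec)

lemma div_le_one_sub_div_mul {x y y' D ε K : ℝ} (hy : 0 < y) (hy' : 0 < y') (hD : 0 ≤ D)
    (hε : 0 ≤ ε) (hx : x ≤ (y - ε * y') * D) (hK : y ≤ K * y') : x / y ≤ (1 - ε / K) * D := by
  have hK0 : 0 < K := pos_of_mul_pos_left (hy.trans_le hK) hy'.le
  rw [div_le_iff₀ hy]
  have hεy : ε * y / K ≤ ε * y' := by rw [div_le_iff₀ hK0]; nlinarith
  have : (1 - ε / K) * D * y = D * y - ε * y / K * D := by ring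
  nlinarith [mul_le_mul_of_nonneg_right hεy hD]

lemma maxRatio_add_two_le (hQ : ∀ j, 0 < Q j)
    (hQrec : ∀ j, Q (j + 2) = a (j + 1) * Q (j + 1) + Q j)
    (hgrec : ∀ j, g (j + 2) ≤ a (j + 1) * g (j + 1) + g j) (hg : ∀ j, 0 ≤ g j)
    {j : ℕ} (ha : 1 ≤ a (j + 2)) {c ε K : ℝ} (hε : 0 ≤ ε) (hc0 : 0 ≤ c)
    (hc : c ≤ a (j + 1) - ε) (hgood : g (j + 2) ≤ c * g (j + 1) + g j)
    (hK : Q (j + 3) ≤ K * Q (j + 1)) :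
    maxRatio Q g (j + 2) ≤ (1 - ε / K) * maxRatio Q g j := by
  have hD := maxRatio_nonneg hQ hg j
  have h0 := le_mul_maxRatio hQ (g := g) j
  have h1 := le_mul_maxRatio_succ hQ (g := g) j
  generalize maxRatio Q g j = D at hD h0 h1 ⊢
  have ha2 : (1 : ℝ) ≤ a (j + 2) := by exact_mod_cast ha
  have hQ3 : Q (j + 3) = a (j + 2) * Q (j + 2) + Q (j + 1) := hQrec (j + 1)
  have hg2 : g (j + 2) ≤ (Q (j + 2) - ε * Q (j + 1)) * D := by
    rw [hQrec]
    nlinarith [mul_le_mul_of_nonneg_left h1 hc0,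
      mul_le_mul_of_nonneg_right hc (mul_nonneg (hQ (j + 1)).le hD)]
  have hg3 : g (j + 3) ≤ (Q (j + 3) - ε * Q (j + 1)) * D := by
    rw [hQ3]
    nlinarith [hgrec (j + 1), mul_le_mul_of_nonneg_left hg2 (a (j + 2)).cast_nonneg,
      mul_nonneg (mul_nonneg hε (hQ (j + 1)).le) hD]
  have hQ23 : Q (j + 2) ≤ Q (j + 3) := by nlinarith [hQ (j + 1), hQ (j + 2)]
  exact max_le (div_le_one_sub_div_mul (hQ _) (hQ _) hD hε hg2 (hQ23.trans hK))
    (div_le_one_sub_div_mul (hQ _) (hQ _) hD hε hg3 hK)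

end maxRatio

lemma Antitone.le_inv_mul_exp {D : ℕ → ℝ} (hD : Antitone D) (hD0 : D 0 ≤ 1) {p : ℕ}
    (hp : 0 < p) {ρ : ℝ} (hρ0 : 0 < ρ) (hρ1 : ρ ≤ 1)
    (hstep : ∀ t, D (p * t + p) ≤ ρ * D (p * t)) (k : ℕ) :
    D k ≤ ρ⁻¹ * Real.exp (-(k * (-Real.log ρ / p))) := by
  have hpow (t : ℕ) : D (p * t) ≤ ρ ^ t := by
    induction t with
    | zero => simpa using hD0
    | succ t ih =>
      rw [pow_succ', mul_add_one]
      exact (hstep t).trans (mul_le_mul_of_nonneg_left ih hρ0.le)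
  have hlog : Real.log ρ ≤ 0 := Real.log_nonpos hρ0.le hρ1
  have hkp : (k : ℝ) / p - 1 ≤ (k / p : ℕ) := by
    have : (k : ℝ) < p * ((k / p : ℕ) + 1) := by exact_mod_cast Nat.lt_mul_div_succ k hp
    rw [div_sub_one (by positivity), div_le_iff₀ (by positivity)]
    linarith
  calc D k ≤ D (p * (k / p)) := hD (Nat.mul_div_le k p)
    _ ≤ ρ ^ (k / p) := hpow _
    _ = Real.exp ((k / p : ℕ) * Real.log ρ) := by rw [Real.exp_nat_mul, Real.exp_log hρ0]
    _ ≤ Real.exp (((k : ℝ) / p - 1) * Real.log ρ) :=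
        Real.exp_le_exp.2 (mul_le_mul_of_nonpos_right hkp hlog)
    _ = ρ⁻¹ * Real.exp (-(k * (-Real.log ρ / p))) := by
        rw [← Real.exp_log (inv_pos.2 hρ0), ← Real.exp_add, Real.log_inv]
        ring_nf

def maxDigit (m i : ℕ) : ℕ := if i % 2 = 0 then 1 else m

lemma one_le_maxDigit {m : ℕ} (hm : 1 ≤ m) (i : ℕ) : 1 ≤ maxDigit m i := by
  unfold maxDigit; split_ifs <;> omega

lemma maxDigit_le {m : ℕ} (hm : 1 ≤ m) (i : ℕ) : maxDigit m i ≤ m := by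
  unfold maxDigit; split_ifs <;> omega

lemma qseq_add_two (m j : ℕ) :
    qseq m (j + 2) = maxDigit m (j + 1) * qseq m (j + 1) + qseq m j := by
  rw [qseq, maxDigit]
  congr 2
  split_ifs <;> omega

lemma qseq_cast_add_two (m j : ℕ) :
    (qseq m (j + 2) : ℝ) = maxDigit m (j + 1) * qseq m (j + 1) + qseq m j := by
  exact_mod_cast qseq_add_two m j

lemma qseq_pos (m : ℕ) : ∀ j, 0 < qseq m j
  | 0 | 1 => Nat.one_pos
  | j + 2 => by rw [qseq]; exact Nat.add_pos_right _ (qseq_pos m j)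

lemma qseq_le_qseq_succ {m : ℕ} (hm : 1 ≤ m) : ∀ j, qseq m j ≤ qseq m (j + 1)
  | 0 => le_rfl
  | j + 1 => by
    rw [qseq_add_two]
    nlinarith [one_le_maxDigit hm (j + 1)]

lemma qseq_mono {m : ℕ} (hm : 1 ≤ m) : Monotone (qseq m) :=
  monotone_nat_of_le_succ (qseq_le_qseq_succ hm)

lemma qseq_add_two_le {m : ℕ} (hm : 1 ≤ m) (j : ℕ) :
    qseq m (j + 2) ≤ (m + 1) * qseq m (j + 1) := by
  rw [qseq_add_two]
  nlinarith [maxDigit_le hm (j + 1), qseq_le_qseq_succ hm j]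

lemma qseq_add_three_le {m : ℕ} (hm : 1 ≤ m) (j : ℕ) :
    qseq m (j + 3) ≤ (m + 1) ^ 2 * qseq m (j + 1) := by
  calc qseq m (j + 3) ≤ (m + 1) * qseq m (j + 2) := qseq_add_two_le hm (j + 1)
    _ ≤ (m + 1) * ((m + 1) * qseq m (j + 1)) := Nat.mul_le_mul_left _ (qseq_add_two_le hm j)
    _ = (m + 1) ^ 2 * qseq m (j + 1) := by ring

lemma qseq_add_five_add_qseq_add_one (m : ℕ) {i : ℕ} (hi : i % 2 = 0) :
    qseq m (i + 5) + qseq m (i + 1) = (m + 2) * qseq m (i + 3) := by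
  have h3 := qseq_add_two m (i + 1)
  have h4 := qseq_add_two m (i + 2)
  have h5 := qseq_add_two m (i + 3)
  simp only [maxDigit, show (i + 2) % 2 = 0 by omega, show (i + 3) % 2 = 1 by omega,
    show (i + 4) % 2 = 0 by omega, if_true, one_mul, Nat.one_ne_zero, if_false] at h3 h4 h5
  rw [h5, h4, h3]
  ring

lemma intDist_div_le_intDist_window (m : ℕ) (γ β : ℝ) {i : ℕ} (hi : i % 2 = 0) :
    intDist (m * γ) / (m + 4) ≤ intDist (γ + β * qseq m (i + 1)) ∨
      intDist (m * γ) / (m + 4) ≤ intDist (γ + β * qseq m (i + 3)) ∨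
      intDist (m * γ) / (m + 4) ≤ intDist (γ + β * qseq m (i + 5)) := by
  by_contra! h
  obtain ⟨h1, h3, h5⟩ := h
  have hq : (qseq m (i + 5) : ℝ) + qseq m (i + 1) = (m + 2) * qseq m (i + 3) := by
    exact_mod_cast qseq_add_five_add_qseq_add_one m hi
  have hmγ : (m : ℝ) * γ = ((m + 2 : ℕ) : ℝ) * (γ + β * qseq m (i + 3)) -
      (γ + β * qseq m (i + 1)) - (γ + β * qseq m (i + 5)) := by
    push_cast; linear_combination β * hq
  have := intDist_nsmul_sub_sub_le (m + 2) (γ + β * qseq m (i + 3))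
    (γ + β * qseq m (i + 1)) (γ + β * qseq m (i + 5))
  rw [← hmγ] at this
  push_cast at this
  have hm4 : (0 : ℝ) < m + 4 := by positivity
  rw [lt_div_iff₀ hm4] at h1 h3 h5
  nlinarith

lemma Finsupp.erase_apply_eq_zero {α M : Type*} [Zero M] {v : α →₀ M} {j i : α}
    (h : i ≠ j → v i = 0) : v.erase j i = 0 := by
  classical
  rw [Finsupp.erase_apply]; split_ifs with hij
  exacts [rfl, h hij]

namespace Ostrowski

def value (m : ℕ) (v : ℕ →₀ ℕ) : ℕ := v.sum fun i c => c * qseq m i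

structure Admissible (m : ℕ) (v : ℕ →₀ ℕ) : Prop where
  apply_zero : v 0 = 0
  le_maxDigit : ∀ i, v i ≤ maxDigit m i
  eq_zero_of_succ_eq : ∀ i, v (i + 1) = maxDigit m (i + 1) → v i = 0

variable {m : ℕ}

lemma value_add (v w : ℕ →₀ ℕ) : value m (v + w) = value m v + value m w :=
  Finsupp.sum_add_index' (fun _ => zero_mul _) fun _ _ _ => add_mul _ _ _

lemma value_single (k c : ℕ) : value m (Finsupp.single k c) = c * qseq m k :=
  Finsupp.sum_single_index (zero_mul _)

lemma value_eq_add_erase (v : ℕ →₀ ℕ) (k : ℕ) :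
    value m v = v k * qseq m k + value m (v.erase k) := by
  conv_lhs => rw [← Finsupp.single_add_erase k v]
  rw [value_add, value_single]

lemma mul_qseq_le_value (v : ℕ →₀ ℕ) (k : ℕ) : v k * qseq m k ≤ value m v := by
  rw [value_eq_add_erase v k]
  exact Nat.le_add_right _ _

lemma apply_eq_zero_of_value_lt (hm : 1 ≤ m) {v : ℕ →₀ ℕ} {k i : ℕ}
    (hv : value m v < qseq m k) (hki : k ≤ i) : v i = 0 := by
  by_contra h
  have := mul_qseq_le_value (m := m) v i
  have := qseq_mono hm hki
  nlinarith [Nat.one_le_iff_ne_zero.2 h]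

lemma Admissible.erase (hm : 1 ≤ m) {v : ℕ →₀ ℕ} (hv : Admissible m v) (k : ℕ) :
    Admissible m (v.erase k) where
  apply_zero := Finsupp.erase_apply_eq_zero fun _ => hv.apply_zero
  le_maxDigit i := by
    rw [Finsupp.erase_apply]; split_ifs
    exacts [Nat.zero_le _, hv.le_maxDigit i]
  eq_zero_of_succ_eq i h := by
    by_cases hk : i + 1 = k
    · rw [hk, Finsupp.erase_same] at h
      exact absurd h.symm (Nat.one_le_iff_ne_zero.1 (one_le_maxDigit hm _))
    · rw [Finsupp.erase_ne hk] at h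
      exact Finsupp.erase_apply_eq_zero fun _ => hv.eq_zero_of_succ_eq i h

theorem value_lt_qseq (hm : 1 ≤ m) :
    ∀ (k : ℕ) {v : ℕ →₀ ℕ}, Admissible m v → (∀ i, k ≤ i → v i = 0) → value m v < qseq m k
  | 0, v, hv, hvk | 1, v, hv, hvk => by
    have : v = 0 := by
      ext i
      rcases i with _ | i
      exacts [hv.apply_zero, hvk _ (by omega)]
    simp [this, value, qseq_pos]
  | k + 2, v, hv, hvk => by
    rw [value_eq_add_erase v (k + 1), qseq_add_two]
    rcases (hv.le_maxDigit (k + 1)).lt_or_eq with hlt | heq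
    · have := value_lt_qseq hm (k + 1) (hv.erase hm (k + 1)) fun i hi =>
        Finsupp.erase_apply_eq_zero fun _ => hvk i (by omega)
      nlinarith
    · have hk := hv.eq_zero_of_succ_eq k heq
      have := value_lt_qseq hm k (hv.erase hm (k + 1)) fun i hi =>
        Finsupp.erase_apply_eq_zero fun _ => by
          rcases hi.eq_or_lt with rfl | hlt
          exacts [hk, hvk i (by omega)]
      rw [heq]
      omega

lemma value_lt_of_apply_lt (hm : 1 ≤ m) {v w : ℕ →₀ ℕ} {k : ℕ} (hv : Admissible m v)
    (hvk : ∀ i, k + 1 ≤ i → v i = 0) (h : v k < w k) : value m v < value m w := by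
  have herase := value_lt_qseq hm k (hv.erase hm k) fun i hi =>
    Finsupp.erase_apply_eq_zero fun _ => hvk i (by omega)
  calc value m v = v k * qseq m k + value m (v.erase k) := value_eq_add_erase v k
    _ < (v k + 1) * qseq m k := by nlinarith
    _ ≤ w k * qseq m k := Nat.mul_le_mul_right _ h
    _ ≤ value m w := mul_qseq_le_value w k

theorem eq_of_value_eq (hm : 1 ≤ m) :
    ∀ (k : ℕ) {v w : ℕ →₀ ℕ}, Admissible m v → Admissible m w →
      (∀ i, k ≤ i → v i = 0) → (∀ i, k ≤ i → w i = 0) → value m v = value m w → v = w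
  | 0, v, w, _, _, hvk, hwk, _ => by
    ext i; rw [hvk i i.zero_le, hwk i i.zero_le]
  | k + 1, v, w, hv, hw, hvk, hwk, hvw => by
    have htop : v k = w k := by
      by_contra hne
      rcases Nat.lt_or_gt_of_ne hne with h | h
      · exact (value_lt_of_apply_lt hm hv hvk h).ne hvw
      · exact (value_lt_of_apply_lt hm hw hwk h).ne hvw.symm
    have hrest : v.erase k = w.erase k := by
      refine eq_of_value_eq hm k (hv.erase hm k) (hw.erase hm k)
        (fun i hi => Finsupp.erase_apply_eq_zero fun _ => hvk i (by omega))
        (fun i hi => Finsupp.erase_apply_eq_zero fun _ => hwk i (by omega)) ?_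
      have hv' := value_eq_add_erase (m := m) v k
      have hw' := value_eq_add_erase (m := m) w k
      rw [htop] at hv'
      omega
    rw [← Finsupp.single_add_erase k v, ← Finsupp.single_add_erase k w, htop, hrest]

lemma Admissible.single_add (hm : 1 ≤ m) {v : ℕ →₀ ℕ} (hv : Admissible m v) {j c : ℕ}
    (hvj : ∀ i, j + 1 ≤ i → v i = 0) (hc : c ≤ maxDigit m (j + 1))
    (hcj : c = maxDigit m (j + 1) → v j = 0) :
    Admissible m (Finsupp.single (j + 1) c + v) where
  apply_zero := by simp [hv.apply_zero]
  le_maxDigit i := by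
    by_cases hi : i = j + 1
    · subst hi; simpa [hvj] using hc
    · simpa [Finsupp.single_apply, Ne.symm hi] using hv.le_maxDigit i
  eq_zero_of_succ_eq i h := by
    simp only [Finsupp.add_apply] at h ⊢
    rcases lt_trichotomy i j with hij | rfl | hij
    · rw [Finsupp.single_eq_of_ne (by omega), zero_add] at h ⊢
      exact hv.eq_zero_of_succ_eq i h
    · rw [Finsupp.single_eq_same, hvj _ le_rfl, add_zero] at h
      rw [Finsupp.single_eq_of_ne (by omega), hcj h]
    · rw [Finsupp.single_eq_of_ne (by omega), hvj _ (by omega)] at h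
      exact absurd h.symm (Nat.one_le_iff_ne_zero.1 (one_le_maxDigit hm _))

end Ostrowski

open Ostrowski

namespace IsOstrowskiDigits

variable {m : ℕ} {b : ℕ → ℕ →₀ ℕ}

lemma admissible (hb : IsOstrowskiDigits m b) (n : ℕ) : Admissible m (b n) where
  apply_zero := hb.2.1 n
  le_maxDigit i := by
    unfold maxDigit
    split_ifs with hi
    exacts [hb.2.2.1 n i hi, hb.2.2.2.1 n i (by omega)]
  eq_zero_of_succ_eq i h := hb.2.2.2.2 n (i + 1) (by omega) h

lemma value_eq (hb : IsOstrowskiDigits m b) (n : ℕ) : value m (b n) = n := hb.1 n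

theorem Sα_mul_qseq_add (hm : 1 ≤ m) (hb : IsOstrowskiDigits m b) {j c u : ℕ}
    (hc : c ≤ maxDigit m (j + 1)) (hcu : c = maxDigit m (j + 1) → u < qseq m j)
    (hu : u < qseq m (j + 1)) :
    Sα b (c * qseq m (j + 1) + u) = c + Sα b u := by
  set w := Finsupp.single (j + 1) c + b u
  have hbu (i : ℕ) (hi : j + 1 ≤ i) : b u i = 0 :=
    apply_eq_zero_of_value_lt hm ((hb.value_eq u).trans_lt hu) hi
  have hw : Admissible m w := (hb.admissible u).single_add hm hbu hc fun h =>
    apply_eq_zero_of_value_lt hm ((hb.value_eq u).trans_lt (hcu h)) le_rfl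
  have hwj (i : ℕ) (hi : j + 2 ≤ i) : w i = 0 := by
    rw [Finsupp.add_apply, Finsupp.single_eq_of_ne (by omega), hbu i (by omega), add_zero]
  have hval : value m w = c * qseq m (j + 1) + u := by
    rw [value_add, value_single, hb.value_eq]
  have hbw : b (c * qseq m (j + 1) + u) = w := by
    refine eq_of_value_eq hm (j + 2) (hb.admissible _) hw (fun i hi => ?_) hwj ?_
    · exact apply_eq_zero_of_value_lt hm
        ((hb.value_eq _).trans_lt (hval ▸ value_lt_qseq hm (j + 2) hw hwj)) hi
    · rw [hb.value_eq, hval]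
  rw [Sα, hbw, Finsupp.sum_add_index' (fun _ => rfl) (fun _ _ _ => rfl),
    Finsupp.sum_single_index rfl]
  rfl

end IsOstrowskiDigits

def digitExpSum (b : ℕ → ℕ →₀ ℕ) (m : ℕ) (γ β : ℝ) (k : ℕ) : ℂ :=
  ∑ u ∈ Finset.range (qseq m k), e (γ * Sα b u + β * u)

section digitExpSum

variable {m : ℕ} {b : ℕ → ℕ →₀ ℕ}

theorem digitExpSum_add_two (hm : 1 ≤ m) (hb : IsOstrowskiDigits m b) (γ β : ℝ) (j : ℕ) :
    digitExpSum b m γ β (j + 2) =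
      (∑ c ∈ Finset.range (maxDigit m (j + 1)), e (c * (γ + β * qseq m (j + 1)))) *
          digitExpSum b m γ β (j + 1) +
        e (maxDigit m (j + 1) * (γ + β * qseq m (j + 1))) * digitExpSum b m γ β j := by
  have hsplit {c u : ℕ} (hc : c ≤ maxDigit m (j + 1))
      (hcu : c = maxDigit m (j + 1) → u < qseq m j) (hu : u < qseq m (j + 1)) :
      e (γ * Sα b (c * qseq m (j + 1) + u) + β * ↑(c * qseq m (j + 1) + u)) =
        e (c * (γ + β * qseq m (j + 1))) * e (γ * Sα b u + β * u) := by
    rw [hb.Sα_mul_qseq_add hm hc hcu hu, ← e_add]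
    push_cast
    ring_nf
  rw [digitExpSum, qseq_add_two m j, Finset.sum_range_mul_add, digitExpSum, digitExpSum,
    Finset.sum_mul, Finset.mul_sum]
  simp only [Finset.mul_sum]
  congr 1
  · refine Finset.sum_congr rfl fun c hc => Finset.sum_congr rfl fun u hu => ?_
    rw [Finset.mem_range] at hc hu
    exact hsplit hc.le (fun h => absurd h hc.ne) hu
  · refine Finset.sum_congr rfl fun u hu => ?_
    rw [Finset.mem_range] at hu
    exact hsplit le_rfl (fun _ => hu) (hu.trans_le (qseq_le_qseq_succ hm j))

lemma norm_digitExpSum_add_two_le (hm : 1 ≤ m) (hb : IsOstrowskiDigits m b) (γ β : ℝ) (j : ℕ) :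
    ‖digitExpSum b m γ β (j + 2)‖ ≤
      ‖∑ c ∈ Finset.range (maxDigit m (j + 1)), e (c * (γ + β * qseq m (j + 1)))‖ *
          ‖digitExpSum b m γ β (j + 1)‖ + ‖digitExpSum b m γ β j‖ := by
  rw [digitExpSum_add_two hm hb]
  refine (norm_add_le _ _).trans ?_
  rw [norm_mul, norm_mul, norm_e, one_mul]

end digitExpSum

-- `‖mγ‖ / (m + 4)` is the lower bound on `‖θ‖` from `intDist_div_le_intDist_window`, and `(m + 1)²`
-- bounds `q_{j+3} / q_{j+1}`.
def decayFactor (m : ℕ) (γ : ℝ) : ℝ := 1 - 4 * (intDist (m * γ) / (m + 4)) ^ 2 / (m + 1) ^ 2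

lemma decayFactor_pos (m : ℕ) (γ : ℝ) : 0 < decayFactor m γ := by
  have hm0 : (0 : ℝ) ≤ m := m.cast_nonneg
  have hδ : intDist (m * γ) / (m + 4) ≤ 1 / 8 := by
    rw [div_le_iff₀ (by positivity)]
    linarith [intDist_le_half (m * γ)]
  have hδ0 : 0 ≤ intDist (m * γ) / (m + 4) := div_nonneg (abs_nonneg _) (by positivity)
  rw [decayFactor, sub_pos, div_lt_one (by positivity)]
  nlinarith [mul_le_mul hδ hδ hδ0 (by norm_num)]

lemma decayFactor_lt_one {m : ℕ} {γ : ℝ} (hγ : intDist (m * γ) ≠ 0) : decayFactor m γ < 1 := by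
  have : 0 < intDist (m * γ) := (abs_nonneg _).lt_of_ne' hγ
  rw [decayFactor, sub_lt_self_iff]
  positivity

def digitExpRatio (b : ℕ → ℕ →₀ ℕ) (m : ℕ) (γ β : ℝ) : ℕ → ℝ :=
  maxRatio (fun k => qseq m k) (fun k => ‖digitExpSum b m γ β k‖)

section digitExpRatio

variable {m : ℕ} {b : ℕ → ℕ →₀ ℕ} {γ β : ℝ}

lemma norm_digitExpSum_le_qseq (k : ℕ) : ‖digitExpSum b m γ β k‖ ≤ qseq m k := by
  simpa [digitExpSum] using norm_sum_e_le_card (Finset.range (qseq m k)) _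

lemma digitExpRatio_zero_le_one : digitExpRatio b m γ β 0 ≤ 1 := by
  refine max_le ?_ ?_ <;>
    exact (div_le_one (Nat.cast_pos.2 (qseq_pos m _))).2 (norm_digitExpSum_le_qseq _)

lemma norm_digitExpSum_add_two_le_maxDigit (hm : 1 ≤ m) (hb : IsOstrowskiDigits m b) (j : ℕ) :
    ‖digitExpSum b m γ β (j + 2)‖ ≤
      maxDigit m (j + 1) * ‖digitExpSum b m γ β (j + 1)‖ + ‖digitExpSum b m γ β j‖ := by
  refine (norm_digitExpSum_add_two_le hm hb γ β j).trans ?_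
  gcongr
  simpa using norm_sum_e_le_card (Finset.range (maxDigit m (j + 1))) _

lemma antitone_digitExpRatio (hm : 1 ≤ m) (hb : IsOstrowskiDigits m b) :
    Antitone (digitExpRatio b m γ β) :=
  antitone_maxRatio (fun k => mod_cast qseq_pos m k) (qseq_cast_add_two m)
    (norm_digitExpSum_add_two_le_maxDigit hm hb)

lemma digitExpRatio_add_two_le (hm : 2 ≤ m) (hb : IsOstrowskiDigits m b) {j : ℕ}
    (hj : j % 2 = 0) {δ : ℝ} (hδ0 : 0 ≤ δ) (hδ : δ ≤ intDist (γ + β * qseq m (j + 1))) :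
    digitExpRatio b m γ β (j + 2) ≤ (1 - 4 * δ ^ 2 / (m + 1) ^ 2) * digitExpRatio b m γ β j := by
  set θ := γ + β * qseq m (j + 1)
  have hmaxDigit : maxDigit m (j + 1) = m := by simp [maxDigit, show (j + 1) % 2 = 1 by omega]
  have hmR : (2 : ℝ) ≤ m := by exact_mod_cast hm
  have hθ := intDist_le_half θ
  have hgood : ‖digitExpSum b m γ β (j + 2)‖ ≤
      (m - 4 * intDist θ ^ 2) * ‖digitExpSum b m γ β (j + 1)‖ + ‖digitExpSum b m γ β j‖ := by
    refine (norm_digitExpSum_add_two_le (by omega) hb γ β j).trans ?_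
    rw [hmaxDigit]
    gcongr
    exact norm_sum_range_e_mul_le hm θ
  have hK : (qseq m (j + 3) : ℝ) ≤ (m + 1) ^ 2 * qseq m (j + 1) := by
    exact_mod_cast qseq_add_three_le (by omega) j
  refine maxRatio_add_two_le (fun k => mod_cast qseq_pos m k) (qseq_cast_add_two m)
    (norm_digitExpSum_add_two_le_maxDigit (by omega) hb) (fun _ => norm_nonneg _)
    (one_le_maxDigit (by omega) _) (by positivity) ?_ ?_ hgood hK
  · nlinarith [abs_nonneg (θ - round θ)]
  · rw [hmaxDigit]
    nlinarith [pow_le_pow_left₀ hδ0 hδ 2]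

lemma digitExpRatio_add_six_le (hm : 2 ≤ m) (hb : IsOstrowskiDigits m b) {i : ℕ}
    (hi : i % 2 = 0) :
    digitExpRatio b m γ β (i + 6) ≤ decayFactor m γ * digitExpRatio b m γ β i := by
  have hδ0 : 0 ≤ intDist (m * γ) / (m + 4) := div_nonneg (abs_nonneg _) (by positivity)
  have hρ0 := (decayFactor_pos m γ).le
  have hanti := antitone_digitExpRatio (γ := γ) (β := β) (by omega) hb
  rcases intDist_div_le_intDist_window m γ β hi with h | h | h
  · exact (hanti (by omega)).trans (digitExpRatio_add_two_le hm hb hi hδ0 h)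
  · calc digitExpRatio b m γ β (i + 6) ≤ digitExpRatio b m γ β (i + 2 + 2) := hanti (by omega)
      _ ≤ decayFactor m γ * digitExpRatio b m γ β (i + 2) :=
        digitExpRatio_add_two_le hm hb (by omega) hδ0 h
      _ ≤ decayFactor m γ * digitExpRatio b m γ β i :=
        mul_le_mul_of_nonneg_left (hanti (by omega)) hρ0
  · exact (digitExpRatio_add_two_le hm hb (j := i + 4) (by omega) hδ0 h).trans
      (mul_le_mul_of_nonneg_left (hanti (by omega)) hρ0)

end digitExpRatio

/-- Exponential decay of `(1/q_k) ∑_{u < q_k} e(γ S_α(u) + β u)` when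
`‖mγ‖ ≠ 0`. -/
theorem matrix_lemma (m : ℕ) (hm : 2 ≤ m)
    (b : ℕ → ℕ →₀ ℕ) (hb : IsOstrowskiDigits m b)
    (γ : ℝ) (hγ : intDist (m * γ) ≠ 0) :
    ∃ C > (0 : ℝ), ∃ η > (0 : ℝ), ∀ β : ℝ, ∀ k : ℕ, 2 ≤ k →
      ‖(1 / (qseq m k : ℂ)) *
          ∑ u ∈ Finset.range (qseq m k), e (γ * Sα b u + β * u)‖ ≤
        C * Real.exp (-(k * η)) := by
  have hρ0 := decayFactor_pos m γ
  have hρ1 := decayFactor_lt_one hγ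
  refine ⟨(decayFactor m γ)⁻¹, inv_pos.2 hρ0, -Real.log (decayFactor m γ) / (6 : ℕ),
    div_pos (neg_pos.2 (Real.log_neg hρ0 hρ1)) (by norm_num), fun β k _ => ?_⟩
  have hratio : ‖(1 / (qseq m k : ℂ)) * ∑ u ∈ Finset.range (qseq m k),
      e (γ * Sα b u + β * u)‖ ≤ digitExpRatio b m γ β k := by
    rw [norm_mul, one_div, norm_inv, Complex.norm_natCast, inv_mul_eq_div]
    exact le_max_left _ _
  exact hratio.trans <| (antitone_digitExpRatio (by omega) hb).le_inv_mul_exp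
    digitExpRatio_zero_le_one (by norm_num) hρ0 hρ1.le
    (fun t => digitExpRatio_add_six_le hm hb (by omega)) k

end
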